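/- Let H be a real separable Hilbert space and let A be a compact positive self-adjoint operator on H (A ∈ Sym⁺(H), A compact). Define h(A) := ∫₀¹ (I + tA)^{-1} dt ∈ L(H). Then: (1) h(A) is self-adjoint positive with operator norm ‖h(A)‖ ≤ 1; (2) A·h(A) = h(A)·A = log(I + A), i.e., h(A) acts on each eigenvector of A with eigenvalue λ by multiplication by log(1+λ)/λ (interpreted as 1 when λ = 0); and (3) for all compact A, B ∈ Sym⁺(H) with A − B ∈ HS(H): ‖h(A) − h(B)‖_HS ≤ (1/2)‖A − B‖_HS. -/

import Mathlib

open scoped RealInnerProductSpace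
open MeasureTheory Filter
set_option linter.unusedSectionVars false
set_option synthInstance.maxHeartbeats 1000000
set_option maxHeartbeats 1000000

noncomputable section

variable {H : Type*} [NormedAddCommGroup H] [InnerProductSpace ℝ H] [CompleteSpace H]

/-- Operator logarithm: for a bounded self-adjoint positive definite operator `T` this agrees
with the logarithm given by the continuous functional (spectral) calculus; it is defined via the
integral formula `log T = ∫₀¹ (T − I)(I + t(T − I))⁻¹ dt`. -/
noncomputable def opLog (T : H →L[ℝ] H) : H →L[ℝ] H :=
  ∫ t in (0:ℝ)..1, (T - 1) * Ring.inverse (1 + t • (T - 1))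

/-- Real powers of an operator: `T ^ r = exp (r · log T)`, agreeing with the continuous
functional (spectral) calculus powers for self-adjoint positive definite `T`. -/
noncomputable def opPow (T : H →L[ℝ] H) (r : ℝ) : H →L[ℝ] H :=
  (NormedSpace.expSeries ℝ (H →L[ℝ] H)).sum (r • opLog T)

variable {E F : Type*} [NormedAddCommGroup E] [InnerProductSpace ℝ E]
  [NormedAddCommGroup F] [InnerProductSpace ℝ F]

/-- `T : E →L[ℝ] F` is a Hilbert–Schmidt operator, expressed w.r.t. the Hilbert basis `e`
of `E` (the notion is independent of the choice of basis). -/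
def IsHS {ι : Type*} (e : HilbertBasis ι ℝ E) (T : E →L[ℝ] F) : Prop :=
  Summable fun i => ‖T (e i)‖ ^ 2

/-- The Hilbert–Schmidt norm of `T`, computed w.r.t. the Hilbert basis `e` of the domain. -/
noncomputable def hsNorm {ι : Type*} (e : HilbertBasis ι ℝ E) (T : E →L[ℝ] F) : ℝ :=
  Real.sqrt (∑' i, ‖T (e i)‖ ^ 2)

/-- The operator `h(A) := ∫₀¹ (I + tA)⁻¹ dt`, so that `A · h(A) = log(I + A)` for positive
self-adjoint compact `A`. -/
noncomputable def opH (S : H →L[ℝ] H) : H →L[ℝ] H :=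
  ∫ t in (0:ℝ)..1, Ring.inverse ((1 : H →L[ℝ] H) + t • S)

namespace Stmt14Aux

variable {H : Type*} [NormedAddCommGroup H] [InnerProductSpace ℝ H] [CompleteSpace H]

/-- resolvent-like operator `(1 + t A)⁻¹`. -/
def res (A : H →L[ℝ] H) (t : ℝ) : H →L[ℝ] H :=
  Ring.inverse ((1 : H →L[ℝ] H) + t • A)

variable {A B : H →L[ℝ] H} {t : ℝ}

lemma inner_one_add (hA : ∀ x : H, 0 ≤ ⟪x, A x⟫) (ht : 0 ≤ t) (x : H) :
    ‖x‖ ^ 2 ≤ ⟪((1 : H →L[ℝ] H) + t • A) x, x⟫ := by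
  have h0 : 0 ≤ t * ⟪A x, x⟫ :=
    mul_nonneg ht (by rw [real_inner_comm]; exact hA x)
  have hx : ((1 : H →L[ℝ] H) + t • A) x = x + t • A x := rfl
  rw [hx, inner_add_left, real_inner_smul_left, real_inner_self_eq_norm_sq]
  linarith

lemma isUnit_one_add (hA : ∀ x : H, 0 ≤ ⟪x, A x⟫) (ht : 0 ≤ t) :
    IsUnit ((1 : H →L[ℝ] H) + t • A) := by
  apply ContinuousLinearMap.isUnit_of_forall_le_norm_inner_map _ (c := 1) one_pos
  intro x
  have h := inner_one_add hA ht x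
  calc ‖x‖ ^ 2 * ((1 : NNReal) : ℝ) = ‖x‖ ^ 2 := by norm_num
    _ ≤ ⟪((1 : H →L[ℝ] H) + t • A) x, x⟫ := h
    _ ≤ ‖⟪((1 : H →L[ℝ] H) + t • A) x, x⟫‖ := by
        rw [Real.norm_eq_abs]; exact le_abs_self _

lemma one_add_apply_res (hA : ∀ x : H, 0 ≤ ⟪x, A x⟫) (ht : 0 ≤ t) (x : H) :
    ((1 : H →L[ℝ] H) + t • A) (res A t x) = x := by
  have h := Ring.mul_inverse_cancel _ (isUnit_one_add hA ht)
  have := congrArg (fun M : H →L[ℝ] H => M x) h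
  simpa [ContinuousLinearMap.mul_apply, res] using this

lemma norm_res_apply_le (hA : ∀ x : H, 0 ≤ ⟪x, A x⟫) (ht : 0 ≤ t) (x : H) :
    ‖res A t x‖ ≤ ‖x‖ := by
  set y := res A t x with hy
  have h1 : ‖y‖ ^ 2 ≤ ⟪x, y⟫ := by
    have := inner_one_add hA ht y
    rwa [hy, one_add_apply_res hA ht] at this
  have h2 : ⟪x, y⟫ ≤ ‖x‖ * ‖y‖ := real_inner_le_norm x y
  nlinarith [norm_nonneg x, norm_nonneg y]

lemma norm_res_le (hA : ∀ x : H, 0 ≤ ⟪x, A x⟫) (ht : 0 ≤ t) : ‖res A t‖ ≤ 1 :=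
  ContinuousLinearMap.opNorm_le_bound _ zero_le_one fun x => by
    simpa using norm_res_apply_le hA ht x

lemma inner_res_nonneg (hA : ∀ x : H, 0 ≤ ⟪x, A x⟫) (ht : 0 ≤ t) (x : H) :
    0 ≤ ⟪x, res A t x⟫ := by
  have h := inner_one_add hA ht (res A t x)
  rw [one_add_apply_res hA ht] at h
  exact le_trans (sq_nonneg _) h

lemma isSelfAdjoint_res (hsa : IsSelfAdjoint A) : IsSelfAdjoint (res A t) := by
  have h : IsSelfAdjoint ((1 : H →L[ℝ] H) + t • A) := by
    show star _ = _
    simp [star_add, star_smul, hsa.star_eq]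
  show star (res A t) = res A t
  rw [res, ← Ring.inverse_star, h.star_eq]

lemma res_symm (hsa : IsSelfAdjoint A) (x y : H) :
    ⟪res A t x, y⟫ = ⟪x, res A t y⟫ :=
  (ContinuousLinearMap.isSelfAdjoint_iff_isSymmetric.mp (isSelfAdjoint_res hsa)) x y

lemma continuousOn_res (hA : ∀ x : H, 0 ≤ ⟪x, A x⟫) :
    ContinuousOn (fun t : ℝ => res A t) (Set.Icc (0 : ℝ) 1) := by
  intro t ht
  apply ContinuousAt.continuousWithinAt
  have hg : ContinuousAt (fun t : ℝ => (1 : H →L[ℝ] H) + t • A) t := by fun_prop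
  have hu := isUnit_one_add hA ht.1 (A := A)
  have h := NormedRing.inverse_continuousAt hu.unit
  rw [IsUnit.unit_spec] at h
  exact ContinuousAt.comp (x := t) (g := Ring.inverse)
    (f := fun t : ℝ => (1 : H →L[ℝ] H) + t • A) h hg

lemma intervalIntegrable_res (hA : ∀ x : H, 0 ≤ ⟪x, A x⟫) :
    IntervalIntegrable (fun t : ℝ => res A t) volume 0 1 := by
  apply ContinuousOn.intervalIntegrable
  rw [Set.uIcc_of_le (by norm_num : (0:ℝ) ≤ 1)]
  exact continuousOn_res hA


lemma opH_apply (hA : ∀ x : H, 0 ≤ ⟪x, A x⟫) (x : H) :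
    opH A x = ∫ t in (0:ℝ)..1, res A t x :=
  ContinuousLinearMap.intervalIntegral_apply (intervalIntegrable_res hA) x

lemma intervalIntegrable_res_apply (hA : ∀ x : H, 0 ≤ ⟪x, A x⟫) (x : H) :
    IntervalIntegrable (fun t : ℝ => res A t x) volume 0 1 := by
  apply ContinuousOn.intervalIntegrable
  rw [Set.uIcc_of_le (by norm_num : (0:ℝ) ≤ 1)]
  exact (continuousOn_res hA).clm_apply continuousOn_const

lemma isSelfAdjoint_opH (hA : ∀ x : H, 0 ≤ ⟪x, A x⟫) (hsa : IsSelfAdjoint A) :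
    IsSelfAdjoint (opH A) := by
  rw [ContinuousLinearMap.isSelfAdjoint_iff_isSymmetric]
  intro x y
  rw [show (opH A : H →ₗ[ℝ] H) x = opH A x from rfl, show (opH A : H →ₗ[ℝ] H) y = opH A y from rfl]
  rw [opH_apply hA, opH_apply hA, real_inner_comm]
  have e1 := ContinuousLinearMap.intervalIntegral_comp_comm (innerSL ℝ y)
    (intervalIntegrable_res_apply hA x)
  have e2 := ContinuousLinearMap.intervalIntegral_comp_comm (innerSL ℝ x)
    (intervalIntegrable_res_apply hA y)
  simp only [innerSL_apply_apply] at e1 e2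
  rw [← e1, ← e2]
  apply intervalIntegral.integral_congr
  intro t ht
  show ⟪y, res A t x⟫ = ⟪x, res A t y⟫
  rw [real_inner_comm (res A t y) x]
  exact (res_symm hsa y x).symm

lemma inner_opH_nonneg (hA : ∀ x : H, 0 ≤ ⟪x, A x⟫) (x : H) :
    0 ≤ ⟪x, opH A x⟫ := by
  rw [opH_apply hA]
  have e1 := ContinuousLinearMap.intervalIntegral_comp_comm (innerSL ℝ x)
    (intervalIntegrable_res_apply hA x)
  simp only [innerSL_apply_apply] at e1
  rw [← e1]
  apply intervalIntegral.integral_nonneg (by norm_num : (0:ℝ) ≤ 1)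
  intro u hu
  simpa using inner_res_nonneg hA hu.1 x

lemma norm_opH_le (hA : ∀ x : H, 0 ≤ ⟪x, A x⟫) : ‖opH A‖ ≤ 1 := by
  have h := intervalIntegral.norm_integral_le_of_norm_le_const (a := (0:ℝ)) (b := 1) (C := 1)
    (f := fun t => res A t) ?_
  · calc ‖opH A‖ = ‖∫ t in (0:ℝ)..1, res A t‖ := rfl
      _ ≤ 1 * |(1:ℝ) - 0| := h
      _ = 1 := by norm_num
  · intro u hu
    rw [Set.uIoc_of_le (by norm_num : (0:ℝ) ≤ 1)] at hu
    exact norm_res_le hA hu.1.le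

lemma one_add_comm : A * ((1 : H →L[ℝ] H) + t • A) = ((1 : H →L[ℝ] H) + t • A) * A := by
  simp [mul_add, add_mul, mul_smul_comm, smul_mul_assoc]

lemma res_comm (hA : ∀ x : H, 0 ≤ ⟪x, A x⟫) (ht : 0 ≤ t) :
    res A t * A = A * res A t := by
  have hu := isUnit_one_add hA ht (A := A)
  have h2 : ((1 : H →L[ℝ] H) + t • A) * res A t = 1 := Ring.mul_inverse_cancel _ hu
  have h3 : res A t * ((1 : H →L[ℝ] H) + t • A) = 1 := Ring.inverse_mul_cancel _ hu
  have h := congrArg (fun M : H →L[ℝ] H => res A t * M * res A t)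
    (one_add_comm (A := A) (t := t))
  simp only [← mul_assoc] at h
  rw [mul_assoc (res A t * A), h2, mul_one, h3, one_mul] at h
  exact h

lemma mul_opH (hA : ∀ x : H, 0 ≤ ⟪x, A x⟫) :
    A * opH A = ∫ t in (0:ℝ)..1, A * res A t := by
  have h := (ContinuousLinearMap.mul ℝ (H →L[ℝ] H) A).intervalIntegral_comp_comm
    (intervalIntegrable_res hA)
  simp only [ContinuousLinearMap.mul_apply'] at h
  exact h.symm

lemma opH_mul (hA : ∀ x : H, 0 ≤ ⟪x, A x⟫) :
    opH A * A = ∫ t in (0:ℝ)..1, res A t * A := by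
  have h := ((ContinuousLinearMap.mul ℝ (H →L[ℝ] H)).flip A).intervalIntegral_comp_comm
    (intervalIntegrable_res hA)
  simp only [ContinuousLinearMap.flip_apply, ContinuousLinearMap.mul_apply'] at h
  exact h.symm

lemma opLog_one_add : opLog (1 + A) = ∫ t in (0:ℝ)..1, A * res A t := by
  simp only [opLog, add_sub_cancel_left, res]

lemma mul_opH_eq (hA : ∀ x : H, 0 ≤ ⟪x, A x⟫) : A * opH A = opLog (1 + A) := by
  rw [mul_opH hA, opLog_one_add]

lemma opH_mul_eq (hA : ∀ x : H, 0 ≤ ⟪x, A x⟫) : opH A * A = opLog (1 + A) := by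
  rw [opH_mul hA, opLog_one_add]
  apply intervalIntegral.integral_congr
  intro t ht
  rw [Set.uIcc_of_le (by norm_num : (0:ℝ) ≤ 1)] at ht
  exact res_comm hA ht.1

lemma res_apply_eigen (hA : ∀ x : H, 0 ≤ ⟪x, A x⟫) (ht : 0 ≤ t) {μ : ℝ} {v : H}
    (hμ : 0 ≤ μ) (hv : A v = μ • v) :
    res A t v = (1 + t * μ)⁻¹ • v := by
  have hpos : (0:ℝ) < 1 + t * μ := by nlinarith
  have key : ((1 : H →L[ℝ] H) + t • A) ((1 + t * μ)⁻¹ • v) = v := by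
    have hAv : A ((1 + t * μ)⁻¹ • v) = (1 + t * μ)⁻¹ • (μ • v) := by
      rw [_root_.map_smul, hv]
    have h1 : ((1 : H →L[ℝ] H) + t • A) ((1 + t * μ)⁻¹ • v)
        = ((1 + t * μ)⁻¹ * (1 + t * μ)) • v := by
      simp only [ContinuousLinearMap.add_apply, ContinuousLinearMap.one_apply,
        ContinuousLinearMap.smul_apply, hAv, smul_smul, ← add_smul]
      congr 1
      ring
    rw [h1, inv_mul_cancel₀ (ne_of_gt hpos), one_smul]
  conv_lhs => rw [← key]
  have h3 : res A t * ((1 : H →L[ℝ] H) + t • A) = 1 :=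
    Ring.inverse_mul_cancel _ (isUnit_one_add hA ht)
  have h := congrArg (fun M : H →L[ℝ] H => M ((1 + t * μ)⁻¹ • v)) h3
  simpa [ContinuousLinearMap.mul_apply, res] using h

lemma integral_inv_one_add {μ : ℝ} (hμ : 0 ≤ μ) :
    (∫ t in (0:ℝ)..1, (1 + t * μ)⁻¹) = if μ = 0 then (1:ℝ) else Real.log (1 + μ) / μ := by
  rcases eq_or_lt_of_le hμ with h | h
  · simp [← h]
  · rw [if_neg (ne_of_gt h)]
    have hc : ∀ u ∈ Set.uIcc (0:ℝ) 1, (0:ℝ) < 1 + u * μ := by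
      intro u hu
      rw [Set.uIcc_of_le (by norm_num : (0:ℝ) ≤ 1)] at hu
      nlinarith [hu.1]
    have hderiv : ∀ u ∈ Set.uIcc (0:ℝ) 1,
        HasDerivAt (fun x => Real.log (1 + x * μ) / μ) ((1 + u * μ)⁻¹) u := by
      intro u hu
      have h1 : HasDerivAt (fun x : ℝ => 1 + x * μ) μ u := by
        simpa using (hasDerivAt_mul_const μ (x := u)).const_add 1
      have h2 := (h1.log (ne_of_gt (hc u hu))).div_const μ
      have hune : 1 + u * μ ≠ 0 := ne_of_gt (hc u hu)
      have hμne : μ ≠ 0 := ne_of_gt h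
      have he : μ / (1 + u * μ) / μ = (1 + u * μ)⁻¹ := by field_simp
      rw [he] at h2
      exact h2
    have hint : IntervalIntegrable (fun u : ℝ => (1 + u * μ)⁻¹) volume 0 1 := by
      apply ContinuousOn.intervalIntegrable
      exact ContinuousOn.inv₀ (by fun_prop) fun u hu => ne_of_gt (hc u hu)
    rw [intervalIntegral.integral_eq_sub_of_hasDerivAt hderiv hint]
    norm_num

lemma opH_eigen (hA : ∀ x : H, 0 ≤ ⟪x, A x⟫) {μ : ℝ} {v : H} (hv : A v = μ • v) :
    opH A v = (if μ = 0 then (1:ℝ) else Real.log (1 + μ) / μ) • v := by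
  by_cases hv0 : v = 0
  · simp [hv0]
  · have hμ : 0 ≤ μ := by
      have h := hA v
      rw [hv, real_inner_smul_right] at h
      have hv2 : 0 < ⟪v, v⟫ := by
        rw [real_inner_self_eq_norm_sq]
        exact pow_pos (norm_pos_iff.mpr hv0) 2
      nlinarith
    rw [opH_apply hA,
      intervalIntegral.integral_congr (g := fun t => (1 + t * μ)⁻¹ • v) ?_,
      intervalIntegral.integral_smul_const, integral_inv_one_add hμ]
    intro t ht
    rw [Set.uIcc_of_le (by norm_num : (0:ℝ) ≤ 1)] at ht
    exact res_apply_eigen hA ht.1 hμ hv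

section HS

variable {ι : Type*}

lemma parseval (e : HilbertBasis ι ℝ H) (x : H) :
    ∑' i, ⟪x, e i⟫ ^ 2 = ‖x‖ ^ 2 := by
  have h := e.tsum_inner_mul_inner x x
  rw [real_inner_self_eq_norm_sq] at h
  rw [← h]
  apply tsum_congr
  intro i
  rw [sq]
  congr 1
  exact real_inner_comm _ _

lemma parseval_summable (e : HilbertBasis ι ℝ H) (x : H) :
    Summable fun i => ⟪x, e i⟫ ^ 2 := by
  have h := e.summable_inner_mul_inner x x
  apply h.congr
  intro i
  rw [sq]
  congr 1
  exact real_inner_comm _ _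

lemma bessel (e : HilbertBasis ι ℝ H) (s : Finset ι) (x : H) :
    ∑ i ∈ s, ⟪e i, x⟫ ^ 2 ≤ ‖x‖ ^ 2 := by
  have h := e.orthonormal.sum_inner_products_le (s := s) x
  simpa [Real.norm_eq_abs, sq_abs] using h

lemma hs_comp_le (e : HilbertBasis ι ℝ H) {T D : H →L[ℝ] H}
    (hTsym : ∀ x y : H, ⟪T x, y⟫ = ⟪x, T y⟫) (hDsym : ∀ x y : H, ⟪D x, y⟫ = ⟪x, D y⟫)
    (hDnorm : ∀ x : H, ‖D x‖ ≤ ‖x‖) (hHS : Summable fun i => ‖T (e i)‖ ^ 2) (s : Finset ι) :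
    ∑ i ∈ s, ‖T (D (e i))‖ ^ 2 ≤ ∑' j, ‖T (e j)‖ ^ 2 := by
  have key : ∀ (j : ι) (i : ι), ⟪T (D (e i)), e j⟫ = ⟪e i, D (T (e j))⟫ := by
    intro j i
    rw [hTsym (D (e i)) (e j), hDsym (e i) (T (e j))]
  have hb : ∀ j, ∑ i ∈ s, ⟪T (D (e i)), e j⟫ ^ 2 ≤ ‖T (e j)‖ ^ 2 := by
    intro j
    calc ∑ i ∈ s, ⟪T (D (e i)), e j⟫ ^ 2 = ∑ i ∈ s, ⟪e i, D (T (e j))⟫ ^ 2 :=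
          Finset.sum_congr rfl fun i _ => by rw [key]
      _ ≤ ‖D (T (e j))‖ ^ 2 := bessel e s _
      _ ≤ ‖T (e j)‖ ^ 2 := pow_le_pow_left₀ (norm_nonneg _) (hDnorm _) 2
  calc ∑ i ∈ s, ‖T (D (e i))‖ ^ 2
      = ∑ i ∈ s, ∑' j, ⟪T (D (e i)), e j⟫ ^ 2 :=
        Finset.sum_congr rfl fun i _ => (parseval e _).symm
    _ = ∑' j, ∑ i ∈ s, ⟪T (D (e i)), e j⟫ ^ 2 :=
        (Summable.tsum_finsetSum fun i _ => parseval_summable e _).symm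
    _ ≤ ∑' j, ‖T (e j)‖ ^ 2 := by
        apply Summable.tsum_le_tsum hb _ hHS
        exact Summable.of_nonneg_of_le
          (fun j => Finset.sum_nonneg fun i _ => sq_nonneg _) hb hHS

lemma res_sub (hA : ∀ x : H, 0 ≤ ⟪x, A x⟫) (hB : ∀ x : H, 0 ≤ ⟪x, B x⟫) (ht : 0 ≤ t) :
    res A t - res B t = (-t) • (res A t * (A - B) * res B t) := by
  have huA := isUnit_one_add hA ht (A := A)
  have huB := isUnit_one_add hB ht (A := B)
  have hAc : res A t * ((1 : H →L[ℝ] H) + t • A) = 1 := Ring.inverse_mul_cancel _ huA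
  have hBc : ((1 : H →L[ℝ] H) + t • B) * res B t = 1 := Ring.mul_inverse_cancel _ huB
  have h1 : res A t * (((1 : H →L[ℝ] H) + t • B) * res B t) = res A t := by
    rw [hBc, mul_one]
  have h2 : res A t * (((1 : H →L[ℝ] H) + t • A) * res B t) = res B t := by
    rw [← mul_assoc, hAc, one_mul]
  have h3 : ((1 : H →L[ℝ] H) + t • B) - ((1 : H →L[ℝ] H) + t • A) = (-t) • (A - B) := by
    rw [add_sub_add_left_eq_sub, neg_smul, smul_sub]
    abel
  calc res A t - res B t
      = res A t * (((1 : H →L[ℝ] H) + t • B) * res B t)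
        - res A t * (((1 : H →L[ℝ] H) + t • A) * res B t) := by rw [h1, h2]
    _ = res A t * ((((1 : H →L[ℝ] H) + t • B) * res B t)
        - (((1 : H →L[ℝ] H) + t • A) * res B t)) := (mul_sub _ _ _).symm
    _ = res A t * ((((1 : H →L[ℝ] H) + t • B) - ((1 : H →L[ℝ] H) + t • A)) * res B t) := by
        rw [sub_mul]
    _ = res A t * (((-t) • (A - B)) * res B t) := by rw [h3]
    _ = (-t) • (res A t * (A - B) * res B t) := by
        rw [smul_mul_assoc, mul_smul_comm]
        simp only [mul_assoc]

instance piLpComplete {ι : Type*} (s : Finset ι) :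
    CompleteSpace (PiLp 2 fun _ : s => H) :=
  inferInstance

/-- the evaluation map `M ↦ (M (e i))_{i ∈ s}` into a finite `L²`-product. -/
def Psi (e : HilbertBasis ι ℝ H) (s : Finset ι) :
    (H →L[ℝ] H) →L[ℝ] PiLp 2 (fun _ : s => H) :=
  (PiLp.continuousLinearEquiv 2 ℝ (fun _ : s => H)).symm.toContinuousLinearMap.comp
    (ContinuousLinearMap.pi fun i : s => ContinuousLinearMap.apply ℝ H (e i))

lemma norm_Psi_sq (e : HilbertBasis ι ℝ H) (s : Finset ι) (M : H →L[ℝ] H) :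
    ‖Psi e s M‖ ^ 2 = ∑ i ∈ s, ‖M (e i)‖ ^ 2 := by
  rw [PiLp.norm_sq_eq_of_L2]
  rw [← Finset.sum_coe_sort s (fun i => ‖M (e i)‖ ^ 2)]
  rfl

open intervalIntegral in
lemma sum_sq_opH_sub_le (e : HilbertBasis ι ℝ H)
    (hA : ∀ x : H, 0 ≤ ⟪x, A x⟫) (hsaA : IsSelfAdjoint A)
    (hB : ∀ x : H, 0 ≤ ⟪x, B x⟫) (hsaB : IsSelfAdjoint B)
    (hHS : Summable fun i => ‖(A - B) (e i)‖ ^ 2) (s : Finset ι) :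
    ∑ i ∈ s, ‖(opH A - opH B) (e i)‖ ^ 2 ≤ (1/4) * ∑' i, ‖(A - B) (e i)‖ ^ 2 := by
  set M := ∑' i, ‖(A - B) (e i)‖ ^ 2 with hM
  have hM0 : 0 ≤ M := tsum_nonneg fun i => sq_nonneg _
  have hTsym : ∀ x y : H, ⟪(A - B) x, y⟫ = ⟪x, (A - B) y⟫ := fun x y =>
    (ContinuousLinearMap.isSelfAdjoint_iff_isSymmetric.mp (hsaA.sub hsaB)) x y
  have hdiff : opH A - opH B = ∫ t in (0:ℝ)..1, (res A t - res B t) :=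
    (intervalIntegral.integral_sub (intervalIntegrable_res hA) (intervalIntegrable_res hB)).symm
  have hint : IntervalIntegrable (fun t : ℝ => res A t - res B t) volume 0 1 :=
    (intervalIntegrable_res hA).sub (intervalIntegrable_res hB)
  have h1 : Psi e s (opH A - opH B) = ∫ t in (0:ℝ)..1, Psi e s (res A t - res B t) := by
    rw [hdiff, (Psi e s).intervalIntegral_comp_comm hint]
  have hbound : ∀ t ∈ Set.Ioc (0:ℝ) 1,
      ‖Psi e s (res A t - res B t)‖ ≤ t * Real.sqrt M := by
    intro t ht
    have ht0 : 0 ≤ t := ht.1.le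
    rw [res_sub hA hB ht0, _root_.map_smul, norm_smul,
      show ‖(-t : ℝ)‖ = t by rw [Real.norm_eq_abs, abs_neg, abs_of_nonneg ht0]]
    apply mul_le_mul_of_nonneg_left _ ht0
    have hsq : ‖Psi e s (res A t * (A - B) * res B t)‖ ^ 2 ≤ M := by
      rw [norm_Psi_sq]
      have hterm : ∀ i ∈ s, ‖(res A t * (A - B) * res B t) (e i)‖ ^ 2
          ≤ ‖(A - B) (res B t (e i))‖ ^ 2 := by
        intro i _
        have hrepr : (res A t * (A - B) * res B t) (e i)
            = res A t ((A - B) (res B t (e i))) := rfl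
        rw [hrepr]
        exact pow_le_pow_left₀ (norm_nonneg _) (norm_res_apply_le hA ht0 _) 2
      calc ∑ i ∈ s, ‖(res A t * (A - B) * res B t) (e i)‖ ^ 2
          ≤ ∑ i ∈ s, ‖(A - B) (res B t (e i))‖ ^ 2 := Finset.sum_le_sum hterm
        _ ≤ M := hs_comp_le e hTsym
            (fun x y => res_symm hsaB x y) (norm_res_apply_le hB ht0) hHS s
    exact (Real.le_sqrt (norm_nonneg _) hM0).mpr hsq
  have h2 : ‖Psi e s (opH A - opH B)‖ ≤ Real.sqrt M / 2 := by
    rw [h1]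
    have hae : ∀ᵐ t ∂(volume.restrict (Set.uIoc (0:ℝ) 1)),
        ‖Psi e s (res A t - res B t)‖ ≤ t * Real.sqrt M := by
      rw [Set.uIoc_of_le (by norm_num : (0:ℝ) ≤ 1)]
      exact (ae_restrict_iff' measurableSet_Ioc).mpr (ae_of_all _ hbound)
    have hgint : IntervalIntegrable (fun t : ℝ => t * Real.sqrt M) volume 0 1 :=
      (continuous_id.mul continuous_const).intervalIntegrable 0 1
    have h := intervalIntegral.norm_integral_le_abs_of_norm_le hae hgint
    refine h.trans_eq ?_
    have hid : (∫ x in (0:ℝ)..1, x) = 1 / 2 := by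
      rw [integral_id]; norm_num
    rw [_root_.intervalIntegral.integral_mul_const, hid,
      abs_of_nonneg (by positivity : (0:ℝ) ≤ 1 / 2 * Real.sqrt M)]
    ring
  calc ∑ i ∈ s, ‖(opH A - opH B) (e i)‖ ^ 2 = ‖Psi e s (opH A - opH B)‖ ^ 2 :=
        (norm_Psi_sq _ _ _).symm
    _ ≤ (Real.sqrt M / 2) ^ 2 := pow_le_pow_left₀ (norm_nonneg _) h2 2
    _ = M / 4 := by rw [div_pow, Real.sq_sqrt hM0]; norm_num
    _ = (1/4) * M := by ring

end HS

end Stmt14Aux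

/-- Properties of `h(A) = ∫₀¹ (I + tA)⁻¹ dt` for compact positive
self-adjoint `A`: positivity and norm bound, the identity `A·h(A) = h(A)·A = log(I + A)`
(with eigenvector action `log(1+λ)/λ`, interpreted as `1` at `λ = 0`), and the Lipschitz
estimate `‖h(A) − h(B)‖_HS ≤ ½‖A − B‖_HS`. -/
theorem statement14 {ι : Type*} [Countable ι] (e : HilbertBasis ι ℝ H) :
    (∀ A : H →L[ℝ] H, IsCompactOperator (⇑A) → IsSelfAdjoint A → (∀ x : H, 0 ≤ ⟪x, A x⟫) →
      (IsSelfAdjoint (opH A) ∧ (∀ x : H, 0 ≤ ⟪x, opH A x⟫) ∧ ‖opH A‖ ≤ 1) ∧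
      (A * opH A = opLog (1 + A) ∧ opH A * A = opLog (1 + A)) ∧
      (∀ (μ : ℝ) (v : H), A v = μ • v →
        opH A v = (if μ = 0 then (1 : ℝ) else Real.log (1 + μ) / μ) • v)) ∧
    (∀ A B : H →L[ℝ] H,
      IsCompactOperator (⇑A) → IsSelfAdjoint A → (∀ x : H, 0 ≤ ⟪x, A x⟫) →
      IsCompactOperator (⇑B) → IsSelfAdjoint B → (∀ x : H, 0 ≤ ⟪x, B x⟫) →
      IsHS e (A - B) →
      IsHS e (opH A - opH B) ∧
      hsNorm e (opH A - opH B) ≤ (1 / 2) * hsNorm e (A - B)) := by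
  constructor
  · intro A _hAc hsa hpos
    refine ⟨⟨Stmt14Aux.isSelfAdjoint_opH hpos hsa, Stmt14Aux.inner_opH_nonneg hpos,
      Stmt14Aux.norm_opH_le hpos⟩,
      ⟨Stmt14Aux.mul_opH_eq hpos, Stmt14Aux.opH_mul_eq hpos⟩, ?_⟩
    intro μ v hv
    exact Stmt14Aux.opH_eigen hpos hv
  · intro A B _hAc hsaA hApos _hBc hsaB hBpos hHS
    have hHS' : Summable fun i => ‖(A - B) (e i)‖ ^ 2 := hHS
    have hkey := fun s => Stmt14Aux.sum_sq_opH_sub_le e hApos hsaA hBpos hsaB hHS' s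
    have hsummable : Summable fun i => ‖(opH A - opH B) (e i)‖ ^ 2 :=
      summable_of_sum_le (fun i => sq_nonneg _) hkey
    refine ⟨hsummable, ?_⟩
    have htsum : ∑' i, ‖(opH A - opH B) (e i)‖ ^ 2
        ≤ (1/4) * ∑' i, ‖(A - B) (e i)‖ ^ 2 :=
      Summable.tsum_le_of_sum_le hsummable hkey
    calc hsNorm e (opH A - opH B)
        = Real.sqrt (∑' i, ‖(opH A - opH B) (e i)‖ ^ 2) := rfl
      _ ≤ Real.sqrt ((1/4) * ∑' i, ‖(A - B) (e i)‖ ^ 2) := Real.sqrt_le_sqrt htsum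
      _ = (1 / 2) * hsNorm e (A - B) := by
          rw [show (1/4 : ℝ) * (∑' i, ‖(A - B) (e i)‖ ^ 2)
              = (1/2)^2 * ∑' i, ‖(A - B) (e i)‖ ^ 2 by ring,
            Real.sqrt_mul (by positivity) _, Real.sqrt_sq (by norm_num : (0:ℝ) ≤ 1/2)]
          rfl
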